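/- arXiv:1502.03005 — 11 statements merged into one kernel-verified Lean document; each statement's English description precedes it below -/
import Mathlib

section
/- A contract (A, (G_I, G_T)) is realizable if and only if there exists a state s such that G_I(s) holds and s is viable, i.e. ∃ s, G_I(s) ∧ Viable(s). (Theorem 1, Alternative realizability) -/
/-- Reachability with respect to assumptions: least predicate closed under
    initial states and assumption-respecting transitions. -/
inductive Reachable {state input : Type*} (I : state → Prop)
    (T : state → input → state → Prop) (A : state → input → Prop) : state → Prop
  | init (s : state) : I s → Reachable I T A s
  | step (s_prev : state) (i : input) (s : state) :
      Reachable I T A s_prev → A s_prev i → T s_prev i s → Reachable I T A s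

/-- A transition system (I, T) is a realization of the contract (A, (GI, GT)). -/
def Realization {state input : Type*} (I : state → Prop)
    (T : state → input → state → Prop) (A : state → input → Prop)
    (GI : state → Prop) (GT : state → input → state → Prop) : Prop :=
  (∀ s, I s → GI s) ∧
  (∀ s i s', Reachable I T A s ∧ A s i ∧ T s i s' → GT s i s') ∧
  (∃ s, I s) ∧
  (∀ s i, Reachable I T A s ∧ A s i → ∃ s', T s i s')

/-- A contract is realizable if some transition system realizes it. -/
def Realizable {state input : Type*} (A : state → input → Prop)
    (GI : state → Prop) (GT : state → input → state → Prop) : Prop :=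
  ∃ I T, Realization I T A GI GT

/-- Viability: the greatest predicate V with
    V s ↔ ∀ i, A s i → ∃ s', GT s i s' ∧ V s'.
    Characterized via Knaster–Tarski as the union of all post-fixed points. -/
def Viable {state input : Type*} (A : state → input → Prop)
    (GT : state → input → state → Prop) (s : state) : Prop :=
  ∃ V : state → Prop, V s ∧ (∀ x, V x → ∀ i, A x i → ∃ s', GT x i s' ∧ V s')

/-- Finite viability: GT can keep responding to valid inputs for n steps. -/
def ViableN {state input : Type*} (A : state → input → Prop)
    (GT : state → input → state → Prop) : ℕ → state → Prop
  | 0, _ => True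
  | n + 1, s => ∀ i, A s i → ∃ s', GT s i s' ∧ ViableN A GT n s'

/-- One-step extendability after n steps. -/
def ExtendN {state input : Type*} (A : state → input → Prop)
    (GT : state → input → state → Prop) : ℕ → state → Prop
  | 0, s => ∀ i, A s i → ∃ s', GT s i s'
  | n + 1, s => ∀ i s₁, A s i ∧ GT s i s₁ → ExtendN A GT n s₁

/-- BaseCheck(n): some initial-guarantee state is viable for n steps. -/
def BaseCheck {state input : Type*} (A : state → input → Prop)
    (GI : state → Prop) (GT : state → input → state → Prop) (n : ℕ) : Prop :=
  ∃ s, GI s ∧ ViableN A GT n s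

/-- ExtendCheck(n): every state is extendable after n steps. -/
def ExtendCheck {state input : Type*} (A : state → input → Prop)
    (GT : state → input → state → Prop) (n : ℕ) : Prop :=
  ∀ s, ExtendN A GT n s

/-- Simplified base check BaseCheck'(n). -/
def BaseCheck' {state input : Type*} (A : state → input → Prop)
    (GI : state → Prop) (GT : state → input → state → Prop) (n : ℕ) : Prop :=
  ∀ s, GI s → ExtendN A GT n s

/-!
The reachable states of a realization form a post-fixed point of the viability operator, so
they are viable, and an initial state is a viable `GI`-state. Conversely, `Viable` is itself a
post-fixed point, so the guarantee `GT` restricted to viable targets, started in a viable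
`GI`-state, never gets stuck on an admissible input: it is a realization.
-/

section Contract

variable {state input : Type*} {A : state → input → Prop} {GT : state → input → state → Prop}

theorem Viable.exists_step {s : state} (hs : Viable A GT s) {i : input} (hA : A s i) :
    ∃ s', GT s i s' ∧ Viable A GT s' := by
  obtain ⟨V, hVs, hV⟩ := hs
  obtain ⟨s', hGT, hVs'⟩ := hV s hVs i hA
  exact ⟨s', hGT, V, hVs', hV⟩

theorem Reachable.induction_on_invariant {I : state → Prop} {T : state → input → state → Prop}
    {P : state → Prop} (hI : ∀ s, I s → P s)
    (hT : ∀ s i s', P s → A s i → T s i s' → P s') {s : state} (hs : Reachable I T A s) :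
    P s := by
  induction hs with
  | init s hs => exact hI s hs
  | step s_prev i s _ hA hT' ih => exact hT s_prev i s ih hA hT'

theorem Realization.viable_of_reachable {I : state → Prop} {T : state → input → state → Prop}
    {GI : state → Prop} (hR : Realization I T A GI GT) {s : state}
    (hs : Reachable I T A s) : Viable A GT s := by
  obtain ⟨-, hGT, -, hTotal⟩ := hR
  refine ⟨Reachable I T A, hs, fun x hx i hA => ?_⟩
  obtain ⟨x', hT⟩ := hTotal x i ⟨hx, hA⟩
  exact ⟨x', hGT x i x' ⟨hx, hA, hT⟩, .step x i x' hx hA hT⟩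

theorem Realization.exists_viable {I : state → Prop} {T : state → input → state → Prop}
    {GI : state → Prop} (hR : Realization I T A GI GT) : ∃ s, GI s ∧ Viable A GT s := by
  obtain ⟨s, hs⟩ := hR.2.2.1
  exact ⟨s, hR.1 s hs, hR.viable_of_reachable (.init s hs)⟩

variable (A GT) in
def viableGuarantee (s : state) (i : input) (s' : state) : Prop :=
  GT s i s' ∧ Viable A GT s'

theorem realization_viableGuarantee {I GI : state → Prop}
    (hI : ∀ s, I s → GI s ∧ Viable A GT s) (hne : ∃ s, I s) :
    Realization I (viableGuarantee A GT) A GI GT := by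
  have hViable {s : state} (hs : Reachable I (viableGuarantee A GT) A s) : Viable A GT s :=
    hs.induction_on_invariant (fun s hs => (hI s hs).2) fun _ _ _ _ _ hT => hT.2
  refine ⟨fun s hs => (hI s hs).1, fun s i s' ⟨_, _, hT⟩ => hT.1, hne, ?_⟩
  rintro s i ⟨hs, hA⟩
  exact (hViable hs).exists_step hA

end Contract

/-- Theorem 1 (Alternative realizability): a contract (A, (GI, GT)) is
    realizable iff there is a state satisfying GI which is viable. -/
theorem alternative_realizability {state input : Type*}
    (A : state → input → Prop) (GI : state → Prop)
    (GT : state → input → state → Prop) :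
    Realizable A GI GT ↔ ∃ s, GI s ∧ Viable A GT s := by
  refine ⟨fun ⟨_, _, hR⟩ => hR.exists_viable, fun ⟨s₀, hGI, hViable⟩ => ?_⟩
  exact ⟨(· = s₀), viableGuarantee A GT,
    realization_viableGuarantee (by rintro s rfl; exact ⟨hGI, hViable⟩) ⟨s₀, rfl⟩⟩
end

section
/- If a transition system (I, T) is a realization of the contract (A, (G_I, G_T)), then every state reachable with respect to the assumption A is viable: ∀ s, Reachable_A(s) → Viable(s). (Key lemma for the 'only if' direction of Theorem 1) -/
theorem Realization.exists_guaranteed_reachable_succ {state input : Type*}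
    {I : state → Prop} {T : state → input → state → Prop} {A : state → input → Prop}
    {GI : state → Prop} {GT : state → input → state → Prop}
    (h : Realization I T A GI GT) {s : state} {i : input}
    (hs : Reachable I T A s) (hA : A s i) :
    ∃ s', GT s i s' ∧ Reachable I T A s' := by
  obtain ⟨s', hT⟩ := h.2.2.2 s i ⟨hs, hA⟩
  exact ⟨s', h.2.1 s i s' ⟨hs, hA, hT⟩, .step s i s' hs hA hT⟩

/-- Key lemma for the 'only if' direction of Theorem 1: in any realization,
    every state reachable with respect to the assumptions is viable. -/
theorem reachable_viable {state input : Type*}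
    (I : state → Prop) (T : state → input → state → Prop)
    (A : state → input → Prop) (GI : state → Prop)
    (GT : state → input → state → Prop)
    (h : Realization I T A GI GT) :
    ∀ s, Reachable I T A s → Viable A GT s :=
  -- The reachable set is itself a post-fixed point of the viability operator.
  fun _ hs => ⟨Reachable I T A, hs, fun _ hx _ hA => h.exists_guaranteed_reachable_succ hx hA⟩
end

section
/- Soundness of the 'unrealizable' result: for a contract (A, (G_I, G_T)), if there exists n such that BaseCheck(n) fails, i.e. ¬(∃ s, G_I(s) ∧ Viable_n(s)), then the contract is not realizable. -/
/-!
A realization answers every allowed input from a reachable state with a transition that is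
guaranteed and leads to a reachable state again, so by induction on `n` every reachable state
is `n`-step viable. Any initial state is reachable and satisfies `G_I`, hence witnesses
`BaseCheck n` for every `n`.
-/

namespace Realization

variable {state input : Type*} {I : state → Prop} {T : state → input → state → Prop}
  {A : state → input → Prop} {GI : state → Prop} {GT : state → input → state → Prop}

theorem viableN_of_reachable (hR : Realization I T A GI GT) (n : ℕ) :
    ∀ s, Reachable I T A s → ViableN A GT n s := by
  obtain ⟨-, hGT, -, htot⟩ := hR
  induction n with
  | zero => exact fun _ _ => trivial
  | succ n ih =>
    intro s hs i hAi
    obtain ⟨s', hT⟩ := htot s i ⟨hs, hAi⟩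
    exact ⟨s', hGT s i s' ⟨hs, hAi, hT⟩, ih s' (.step s i s' hs hAi hT)⟩

theorem baseCheck (hR : Realization I T A GI GT) (n : ℕ) : BaseCheck A GI GT n := by
  obtain ⟨s, hI⟩ := hR.2.2.1
  exact ⟨s, hR.1 s hI, hR.viableN_of_reachable n s (.init s hI)⟩

end Realization

/-- Soundness of the 'unrealizable' result: if some BaseCheck(n) fails,
    the contract is not realizable. -/
theorem unrealizable_sound {state input : Type*}
    (A : state → input → Prop) (GI : state → Prop)
    (GT : state → input → state → Prop)
    (h : ∃ n, ¬ BaseCheck A GI GT n) :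
    ¬ Realizable A GI GT := by
  obtain ⟨n, hn⟩ := h
  rintro ⟨I, T, hR⟩
  exact hn (hR.baseCheck n)
end

section
/- Shifting lemma: for a contract (A, (G_I, G_T)), for all states s, numbers n, and inputs i, if Extend_n(s), Viable_n(s), and A(s, i) hold, then there exists a state s' with G_T(s, i, s') and Viable_n(s'). -/
theorem viableN_succ_of_extendN {state input : Type*} {A : state → input → Prop}
    {GT : state → input → state → Prop} :
    ∀ {n : ℕ} {s : state}, ExtendN A GT n s → ViableN A GT n s → ViableN A GT (n + 1) s
  | 0, _, hE, _ => fun i hA => (hE i hA).imp fun _ hGT => ⟨hGT, trivial⟩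
  | _ + 1, _, hE, hV => fun i hA =>
    let ⟨s', hGT, hV'⟩ := hV i hA
    ⟨s', hGT, viableN_succ_of_extendN (hE i s' ⟨hA, hGT⟩) hV'⟩

/-- Shifting lemma: Extend_n and Viable_n let us shift Viable_n forward. -/
theorem shifting_lemma {state input : Type*}
    (A : state → input → Prop) (GT : state → input → state → Prop) :
    ∀ (s : state) (n : ℕ) (i : input),
      ExtendN A GT n s → ViableN A GT n s → A s i →
      ∃ s', GT s i s' ∧ ViableN A GT n s' :=
  fun _ _ i hE hV hA => viableN_succ_of_extendN hE hV i hA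
end

section
/- Coinduction lemma: for a contract (A, (G_I, G_T)), for all states s and numbers n, if Viable_n(s) holds and ExtendCheck(n) holds (i.e. every state satisfies Extend_n), then s is viable: Viable(s). -/
/- Viability is the greatest fixed point, so it suffices to exhibit a post-fixed point containing
`s`; under `ExtendCheck A GT n` the predicate `ViableN A GT n` is one, because any state viable for
`n` steps can be extended to one viable for `n + 1` steps. -/

theorem ViableN.succ_of_extendN {state input : Type*} {A : state → input → Prop}
    {GT : state → input → state → Prop} {n : ℕ} {s : state} (hext : ExtendN A GT n s)
    (hviable : ViableN A GT n s) : ViableN A GT (n + 1) s := by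
  induction n generalizing s with
  | zero => exact fun i hA => (hext i hA).imp fun _ hGT => ⟨hGT, trivial⟩
  | succ n ih =>
    exact fun i hA => (hviable i hA).imp fun s' ⟨hGT, hviable'⟩ =>
      ⟨hGT, ih (hext i s' ⟨hA, hGT⟩) hviable'⟩

/-- Coinduction lemma: if Viable_n(s) and ExtendCheck(n), then Viable(s). -/
theorem viableN_extendCheck_viable {state input : Type*}
    (A : state → input → Prop) (GT : state → input → state → Prop) :
    ∀ (s : state) (n : ℕ), ViableN A GT n s → ExtendCheck A GT n →
      Viable A GT s := by
  intro s n hviable hcheck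
  exact ⟨ViableN A GT n, hviable, fun x hx => ViableN.succ_of_extendN (hcheck x) hx⟩
end

section
/- For a contract (A, (G_I, G_T)), for all states s and numbers n, if Extend_n(s) and Viable_n(s) hold then Viable_{n+1}(s) holds. -/
/-- Extend_n(s) and Viable_n(s) imply Viable_{n+1}(s). -/
theorem extendN_viableN_succ {state input : Type*}
    (A : state → input → Prop) (GT : state → input → state → Prop) :
    ∀ (s : state) (n : ℕ), ExtendN A GT n s → ViableN A GT n s →
      ViableN A GT (n + 1) s := by
  intro s n
  induction n generalizing s with
  | zero =>
    intro hExtend _ i hA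
    obtain ⟨s', hGT⟩ := hExtend i hA
    exact ⟨s', hGT, trivial⟩
  | succ n ih =>
    intro hExtend hViable i hA
    obtain ⟨s', hGT, hViable'⟩ := hViable i hA
    exact ⟨s', hGT, ih s' (hExtend i s' ⟨hA, hGT⟩) hViable'⟩
end

section
/- One-way soundness of the simplified base check: for a contract (A, (G_I, G_T)), if there exists a state s with G_I(s), then for every n, if BaseCheck'(k) holds for all k ≤ n, then BaseCheck(n) holds. (Theorem on one-way soundness of the simplified base check) -/
/-! `ExtendN A GT 0` supplies a successor for every admissible input, and `ExtendN A GT (k + 1)`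
at `s` passes `ExtendN A GT k` on to every such successor, so induction on `n` assembles
`ViableN A GT n` from `ExtendN A GT 0, …, ExtendN A GT n`. -/

theorem viableN_of_forall_le_extendN {state input : Type*} (A : state → input → Prop)
    (GT : state → input → state → Prop) :
    ∀ n s, (∀ k ≤ n, ExtendN A GT k s) → ViableN A GT n s
  | 0, _, _ => trivial
  | n + 1, s, hext => fun i hA => by
    obtain ⟨s', hGT⟩ := hext 0 (n + 1).zero_le i hA
    exact ⟨s', hGT, viableN_of_forall_le_extendN A GT n s' fun k hk =>
      hext (k + 1) (Nat.succ_le_succ hk) i s' ⟨hA, hGT⟩⟩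

/-- One-way soundness of the simplified base check. -/
theorem baseCheck'_sound {state input : Type*}
    (A : state → input → Prop) (GI : state → Prop)
    (GT : state → input → state → Prop) :
    (∃ s, GI s) →
    ∀ n, (∀ k ≤ n, BaseCheck' A GI GT k) → BaseCheck A GI GT n := by
  rintro ⟨s, hs⟩ n hbase
  exact ⟨s, hs, viableN_of_forall_le_extendN A GT n s fun k hk => hbase k hk s hs⟩
end

section
/- Incompleteness example (realizable side), part 1: take state = ℤ and input any inhabited type, and consider the contract with A(s, i) := True, G_I(s) := True, and G_T(s, i, s') := (s ≠ 0). This contract is realizable; in particular, the transition system with I(s) := (s = 1) and T(s, i, s') := (s' = 1) is a realization of it. -/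
theorem Reachable.of_invariant {state input : Type*} {I : state → Prop}
    {T : state → input → state → Prop} {A : state → input → Prop} {P : state → Prop}
    (hI : ∀ s, I s → P s) (hT : ∀ s i s', T s i s' → P s') {s : state}
    (h : Reachable I T A s) : P s := by
  induction h with
  | init s hs => exact hI s hs
  | step _ i s _ _ ht _ => exact hT _ i s ht

/-- The system that starts in `s₀` and stays there forever never reaches any other state,
so it only has to meet the guarantees at `s₀`. -/
theorem realization_const {state input : Type*} {A : state → input → Prop}
    {GI : state → Prop} {GT : state → input → state → Prop} (s₀ : state)
    (hGI : GI s₀) (hGT : ∀ i, A s₀ i → GT s₀ i s₀) :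
    Realization (· = s₀) (fun _ _ s' => s' = s₀) A GI GT := by
  have reach_eq : ∀ s, Reachable (· = s₀) (fun _ _ s' => s' = s₀) A s → s = s₀ :=
    fun _ => Reachable.of_invariant (P := (· = s₀)) (fun _ h => h) (fun _ _ _ h => h)
  refine ⟨fun s hs => hs ▸ hGI, ?_, ⟨s₀, rfl⟩, fun _ _ _ => ⟨s₀, rfl⟩⟩
  rintro s i s' ⟨hs, hA, rfl⟩
  obtain rfl := reach_eq s hs
  exact hGT i hA

theorem example_realizable_general {input : Type*} :
    Realizable (fun (_ : ℤ) (_ : input) => True) (fun (_ : ℤ) => True)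
      (fun (s : ℤ) (_ : input) (_ : ℤ) => s ≠ 0) ∧
    Realization (fun (s : ℤ) => s = 1)
      (fun (_ : ℤ) (_ : input) (s' : ℤ) => s' = 1)
      (fun (_ : ℤ) (_ : input) => True) (fun (_ : ℤ) => True)
      (fun (s : ℤ) (_ : input) (_ : ℤ) => s ≠ 0) := by
  have h := realization_const (A := fun (_ : ℤ) (_ : input) => True)
    (GI := fun _ => True) (GT := fun s _ _ => s ≠ 0) 1 trivial fun _ _ => one_ne_zero
  exact ⟨⟨_, _, h⟩, h⟩

/-- Incompleteness example (realizable side), part 1: the contract with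
    A := True, GI := True, GT s i s' := (s ≠ 0) over integer states is
    realizable; the system starting in state 1 and always transitioning to
    state 1 realizes it. -/
theorem example_realizable {input : Type*} [Inhabited input] :
    Realizable (fun (_ : ℤ) (_ : input) => True) (fun (_ : ℤ) => True)
      (fun (s : ℤ) (_ : input) (_ : ℤ) => s ≠ 0) ∧
    Realization (fun (s : ℤ) => s = 1)
      (fun (_ : ℤ) (_ : input) (s' : ℤ) => s' = 1)
      (fun (_ : ℤ) (_ : input) => True) (fun (_ : ℤ) => True)
      (fun (s : ℤ) (_ : input) (_ : ℤ) => s ≠ 0) :=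
  example_realizable_general
end

section
/- Incompleteness example (realizable side), part 2: take state = ℤ and input any inhabited type, and consider the contract with A(s, i) := True, G_I(s) := True, and G_T(s, i, s') := (s ≠ 0). For every n, ExtendCheck(n) fails, i.e. ¬(∀ s, Extend_n(s)). -/
section Refutation

variable {state input : Type*} {A : state → input → Prop} {GT : state → input → state → Prop}

theorem not_extendCheck_zero_of_stuck {s : state} {i : input} (hA : A s i)
    (hstuck : ∀ s', ¬ GT s i s') : ¬ ExtendCheck A GT 0 := fun h =>
  let ⟨s', hs'⟩ := h s i hA
  hstuck s' hs'

theorem not_extendCheck_succ_of_reachesAll {u : state} (hu : ∀ t, ∃ i, A u i ∧ GT u i t)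
    {n : ℕ} (hn : ¬ ExtendCheck A GT n) : ¬ ExtendCheck A GT (n + 1) := fun h =>
  hn fun t =>
    let ⟨i, hi⟩ := hu t
    h u i t hi

theorem not_extendCheck_of_stuck_of_reachesAll {s u : state} {i : input} (hA : A s i)
    (hstuck : ∀ s', ¬ GT s i s') (hu : ∀ t, ∃ j, A u j ∧ GT u j t) (n : ℕ) :
    ¬ ExtendCheck A GT n := by
  induction n with
  | zero => exact not_extendCheck_zero_of_stuck hA hstuck
  | succ n ih => exact not_extendCheck_succ_of_reachesAll hu ih

end Refutation

/-- Incompleteness example (realizable side), part 2: for the contract with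
    A := True, GI := True, GT s i s' := (s ≠ 0) over integer states,
    ExtendCheck(n) fails for every n. -/
theorem example_extendCheck_fails {input : Type*} [Inhabited input] :
    ∀ n : ℕ, ¬ ExtendCheck (fun (_ : ℤ) (_ : input) => True)
      (fun (s : ℤ) (_ : input) (_ : ℤ) => s ≠ 0) n := by
  exact not_extendCheck_of_stuck_of_reachesAll (s := 0) (u := 1) (i := default) trivial
    (fun _ h => h rfl) (fun _ => ⟨default, trivial, one_ne_zero⟩)
end

section
/- Incompleteness example (unrealizable side), part 2: take state = ℤ and input any inhabited type, and consider the contract with A(s, i) := True, G_I(s) := (s ≥ 0), and G_T(s, i, s') := (s' = s - 1 ∧ s' ≥ 0). For every n, BaseCheck(n) holds, i.e. ∃ s, G_I(s) ∧ Viable_n(s); in particular the state s = n witnesses it. -/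
def countdownGuarantee {input : Type*} (s : ℤ) (_ : input) (s' : ℤ) : Prop :=
  s' = s - 1 ∧ s' ≥ 0

theorem viableN_countdownGuarantee_of_le {input : Type*} :
    ∀ {n : ℕ} {s : ℤ}, (n : ℤ) ≤ s →
      ViableN (fun (_ : ℤ) (_ : input) => True) countdownGuarantee n s
  | 0, _, _ => trivial
  | n + 1, s, hs => fun _ _ =>
    ⟨s - 1, ⟨rfl, by omega⟩, viableN_countdownGuarantee_of_le (by push_cast at hs; omega)⟩

theorem example_baseCheck_holds_general {input : Type*} :
    ∀ n : ℕ, (fun s : ℤ => s ≥ 0) (n : ℤ) ∧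
      ViableN (fun (_ : ℤ) (_ : input) => True)
        (fun (s : ℤ) (_ : input) (s' : ℤ) => s' = s - 1 ∧ s' ≥ 0) n (n : ℤ) ∧
      BaseCheck (fun (_ : ℤ) (_ : input) => True) (fun (s : ℤ) => s ≥ 0)
        (fun (s : ℤ) (_ : input) (s' : ℤ) => s' = s - 1 ∧ s' ≥ 0) n := by
  intro n
  have hviable : ViableN (fun (_ : ℤ) (_ : input) => True) countdownGuarantee n (n : ℤ) :=
    viableN_countdownGuarantee_of_le le_rfl
  exact ⟨Int.natCast_nonneg n, hviable, n, Int.natCast_nonneg n, hviable⟩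

/-- Incompleteness example (unrealizable side), part 2: for the contract with
    A := True, GI s := (s ≥ 0), GT s i s' := (s' = s - 1 ∧ s' ≥ 0) over
    integer states, BaseCheck(n) holds for every n, witnessed by s = n. -/
theorem example_baseCheck_holds {input : Type*} [Inhabited input] :
    ∀ n : ℕ, (fun s : ℤ => s ≥ 0) (n : ℤ) ∧
      ViableN (fun (_ : ℤ) (_ : input) => True)
        (fun (s : ℤ) (_ : input) (s' : ℤ) => s' = s - 1 ∧ s' ≥ 0) n (n : ℤ) ∧
      BaseCheck (fun (_ : ℤ) (_ : input) => True) (fun (s : ℤ) => s ≥ 0)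
        (fun (s : ℤ) (_ : input) (s' : ℤ) => s' = s - 1 ∧ s' ≥ 0) n :=
  example_baseCheck_holds_general
end

section
/- Spurious failure of the simplified base check: take state = ℤ and input any inhabited type, and consider the contract with A(s, i) := True, G_I(s) := True, and G_T(s, i, s') := (s ≠ 0). For every n, BaseCheck'(n) fails, i.e. ¬(∀ s, G_I(s) → Extend_n(s)), even though the contract is realizable. -/
/-!
The guarantee forbids every move out of `0`, so `0` is a dead end and fails `ExtendN 0`. The state
`1` may loop on itself and may also step to `0`; looping `n` times and then exiting shows that `1`
fails `ExtendN (n + 1)`. Both states satisfy `GI`, so every `BaseCheck'` fails. Yet the system that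
never leaves `1` realizes the contract: the dead end is never reached.
-/

section Contracts

variable {state input : Type*} {A : state → input → Prop} {GI : state → Prop}
  {GT : state → input → state → Prop}

theorem not_extendN_succ_of_loop_of_exit {c d : state} {i j : input}
    (hloop : A c i ∧ GT c i c) (hexit : A c j ∧ GT c j d) (hd : ¬ ExtendN A GT 0 d) :
    ∀ n, ¬ ExtendN A GT (n + 1) c
  | 0 => fun h => hd (h j d hexit)
  | n + 1 => fun h => not_extendN_succ_of_loop_of_exit hloop hexit hd n (h i c hloop)

theorem Reachable.eq_of_const {c s : state}
    (h : Reachable (· = c) (fun _ _ s' => s' = c) A s) : s = c := by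
  cases h <;> assumption

theorem realizable_of_self_loop (c : state) (hI : GI c) (hloop : ∀ i, A c i → GT c i c) :
    Realizable A GI GT := by
  refine ⟨(· = c), fun _ _ s' => s' = c, ?_, ?_, ⟨c, rfl⟩, fun _ _ _ => ⟨c, rfl⟩⟩
  · rintro s rfl
    exact hI
  · rintro s i s' ⟨hs, hA, rfl⟩
    obtain rfl := hs.eq_of_const
    exact hloop i hA

end Contracts

/-- Spurious failure of the simplified base check: for the contract with
    A := True, GI := True, GT s i s' := (s ≠ 0) over integer states,
    BaseCheck'(n) fails for every n, even though the contract is realizable. -/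
theorem example_baseCheck'_fails {input : Type*} [Inhabited input] :
    (∀ n : ℕ, ¬ BaseCheck' (fun (_ : ℤ) (_ : input) => True)
      (fun (_ : ℤ) => True) (fun (s : ℤ) (_ : input) (_ : ℤ) => s ≠ 0) n) ∧
    Realizable (fun (_ : ℤ) (_ : input) => True) (fun (_ : ℤ) => True)
      (fun (s : ℤ) (_ : input) (_ : ℤ) => s ≠ 0) := by
  have dead_end : ¬ ExtendN (fun (_ : ℤ) (_ : input) => True)
      (fun (s : ℤ) (_ : input) (_ : ℤ) => s ≠ 0) 0 0 := fun h =>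
    (h default trivial).choose_spec rfl
  refine ⟨fun n hbase => ?_, realizable_of_self_loop 1 trivial fun _ _ => one_ne_zero⟩
  cases n with
  | zero => exact dead_end (hbase 0 trivial)
  | succ n =>
    exact not_extendN_succ_of_loop_of_exit (i := default) (j := default)
      ⟨trivial, one_ne_zero⟩ ⟨trivial, one_ne_zero⟩ dead_end n (hbase 1 trivial)
end
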